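/- Let 𝒢 be a real Hilbert space, let φ ∈ Γ₀(𝒢), let C = {(μ, u) ∈ ℝ × 𝒢 : μ + φ*(u) ≤ 0}, let η ∈ ℝ, and let y ∈ 𝒢. Then the subdifferential of the perspective φ̃ at (η, y) is: {(φ(y/η) − ⟨y, u⟩/η, u) : u ∈ ∂φ(y/η)} if η > 0; {(μ, u) ∈ C : σ_{dom φ*}(y) = ⟨y, u⟩} if η = 0 and y ≠ 0; C if η = 0 and y = 0; and the empty set if η < 0. -/

import Mathlib

open scoped RealInnerProductSpace Classical

noncomputable section

/-- Properness for extended-real-valued functions. -/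
def IsProperE {G : Type*} (f : G → EReal) : Prop :=
  (∀ x, f x ≠ ⊥) ∧ ∃ x, f x ≠ ⊤

/-- Convexity for extended-real-valued functions. -/
def ConvexE (G : Type*) [AddCommGroup G] [Module ℝ G] (f : G → EReal) : Prop :=
  ∀ x y : G, ∀ a b : ℝ, 0 ≤ a → 0 ≤ b → a + b = 1 →
    f (a • x + b • y) ≤ (a : EReal) * f x + (b : EReal) * f y

/-- The class Γ₀: proper, lower semicontinuous, convex. -/
def Gamma0 (G : Type*) [AddCommGroup G] [Module ℝ G] [TopologicalSpace G]
    (f : G → EReal) : Prop :=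
  IsProperE f ∧ LowerSemicontinuous f ∧ ConvexE G f

/-- The recession function. -/
def recFn {G : Type*} [AddCommGroup G] (f : G → EReal) (y : G) : EReal :=
  ⨆ x : {x : G // f x ≠ ⊤}, (f ((x : G) + y) - f (x : G))

/-- The perspective function. -/
def persp {G : Type*} [AddCommGroup G] [Module ℝ G] (f : G → EReal) : ℝ × G → EReal :=
  fun p => if 0 < p.1 then (p.1 : EReal) * f (p.1⁻¹ • p.2)
           else if p.1 = 0 then recFn f p.2 else ⊤

/-- The Fenchel conjugate. -/
def conjFn {G : Type*} [NormedAddCommGroup G] [InnerProductSpace ℝ G]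
    (f : G → EReal) (u : G) : EReal :=
  ⨆ x : G, (((inner ℝ x u : ℝ) : EReal) - f x)

/-- The support function of a set. -/
def suppFn {G : Type*} [NormedAddCommGroup G] [InnerProductSpace ℝ G]
    (D : Set G) (y : G) : EReal :=
  ⨆ u ∈ D, ((inner ℝ y u : ℝ) : EReal)

/-- The convex subdifferential. -/
def subdiff {G : Type*} [NormedAddCommGroup G] [InnerProductSpace ℝ G]
    (f : G → EReal) (x : G) : Set G :=
  {u | ∀ z : G, (((inner ℝ (z - x) u : ℝ) : EReal) + f x ≤ f z)}


/-- The subdifferential of the perspective function, with respect to the inner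
product `⟨(η,y),(μ,u)⟩ = ημ + ⟨y,u⟩` of the Hilbert direct sum `ℝ ⊕ 𝒢`. -/
def perspSubdiff {G : Type*} [NormedAddCommGroup G] [InnerProductSpace ℝ G]
    (f : G → EReal) (η : ℝ) (y : G) : Set (ℝ × G) :=
  {m | ∀ q : ℝ × G,
      (((q.1 - η) * m.1 + inner ℝ (q.2 - y) m.2 : ℝ) : EReal) + persp f (η, y) ≤ persp f q}

section PerspHelpers

set_option linter.unusedSectionVars false

variable {G : Type*} [NormedAddCommGroup G] [InnerProductSpace ℝ G]

lemma ereal_cases (a : EReal) : a = ⊥ ∨ a = ⊤ ∨ ∃ r : ℝ, a = (r : EReal) := by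
  induction a with
  | bot => exact Or.inl rfl
  | coe r => exact Or.inr (Or.inr ⟨r, rfl⟩)
  | top => exact Or.inr (Or.inl rfl)

lemma proper_cases {φ : G → EReal} (hp : IsProperE φ) (z : G) :
    φ z = ⊤ ∨ ∃ r : ℝ, φ z = (r : EReal) :=
  (ereal_cases (φ z)).resolve_left (hp.1 z)

lemma exists_real_value {φ : G → EReal} (hp : IsProperE φ) :
    ∃ (x : G) (r : ℝ), φ x = (r : EReal) := by
  obtain ⟨x, hx⟩ := hp.2
  rcases proper_cases hp x with h | ⟨r, hr⟩
  · exact absurd h hx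
  · exact ⟨x, r, hr⟩

lemma fy (φ : G → EReal) (x u : G) :
    ((inner ℝ x u : ℝ) : EReal) - φ x ≤ conjFn φ u :=
  le_iSup (fun x : G => ((inner ℝ x u : ℝ) : EReal) - φ x) x

lemma conj_ne_bot {φ : G → EReal} (hp : IsProperE φ) (u : G) : conjFn φ u ≠ ⊥ := by
  obtain ⟨x, r, hr⟩ := exists_real_value hp
  have h := fy φ x u
  rw [hr] at h
  intro hb
  rw [hb, le_bot_iff] at h
  exact EReal.coe_ne_bot _ (by exact_mod_cast h)

lemma fy' {φ : G → EReal} (hp : IsProperE φ) {u : G} {s : ℝ}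
    (h : conjFn φ u ≤ (s : EReal)) (x : G) :
    (((inner ℝ x u : ℝ) - s : ℝ) : EReal) ≤ φ x := by
  rcases proper_cases hp x with ht | ⟨r, hr⟩
  · rw [ht]; exact le_top
  · have h2 := (fy φ x u).trans h
    rw [hr] at h2 ⊢
    have : (inner ℝ x u : ℝ) - r ≤ s := by exact_mod_cast h2
    exact_mod_cast (by linarith : (inner ℝ x u : ℝ) - s ≤ r)

lemma rec_pair {φ : G → EReal} {x : G} (hx : φ x ≠ ⊤) (y : G) :
    φ (x + y) - φ x ≤ recFn φ y :=
  le_iSup (fun p : {x : G // φ x ≠ ⊤} => φ ((p : G) + y) - φ (p : G)) ⟨x, hx⟩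

lemma rec_pair' {φ : G → EReal} {x : G} {r : ℝ} (hx : φ x = (r : EReal)) (y : G) :
    φ (x + y) ≤ recFn φ y + (r : EReal) := by
  have h := rec_pair (x := x) (φ := φ) (by rw [hx]; exact EReal.coe_ne_top r) y
  rw [hx] at h
  exact (EReal.sub_le_iff_le_add (Or.inl (EReal.coe_ne_bot r))
    (Or.inl (EReal.coe_ne_top r))).1 h

lemma rec_ne_bot {φ : G → EReal} (hp : IsProperE φ) (y : G) : recFn φ y ≠ ⊥ := by
  obtain ⟨x, r, hr⟩ := exists_real_value hp
  have h := rec_pair (x := x) (φ := φ) (by rw [hr]; exact EReal.coe_ne_top r) y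
  intro hb
  rw [hb, le_bot_iff] at h
  rcases proper_cases hp (x + y) with ht | ⟨r', hr'⟩
  · rw [ht, hr, EReal.top_sub_coe] at h; exact top_ne_bot h
  · rw [hr', hr, ← EReal.coe_sub] at h; exact EReal.coe_ne_bot _ h

lemma rec_zero {φ : G → EReal} (hp : IsProperE φ) : recFn φ 0 = 0 := by
  obtain ⟨x₀, r₀, hr₀⟩ := exists_real_value hp
  refine le_antisymm (iSup_le ?_) ?_
  · rintro ⟨x, hx⟩
    rcases proper_cases hp x with ht | ⟨r, hr⟩
    · exact absurd ht hx
    · simp only [add_zero, hr, ← EReal.coe_sub, sub_self]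
      exact le_refl _
  · have h := le_iSup (fun p : {x : G // φ x ≠ ⊤} => φ ((p : G) + 0) - φ (p : G))
      ⟨x₀, by rw [hr₀]; exact EReal.coe_ne_top r₀⟩
    refine le_trans ?_ h
    simp [hr₀, ← EReal.coe_sub]

lemma rec_two {φ : G → EReal} (hp : IsProperE φ) (y : G) :
    recFn φ (y + y) ≤ recFn φ y + recFn φ y := by
  rcases ereal_cases (recFn φ y) with hb | ht | ⟨s, hs⟩
  · exact absurd hb (rec_ne_bot hp y)
  · rw [ht]; simp
  · refine iSup_le ?_
    rintro ⟨x, hx⟩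
    rcases proper_cases hp x with ht | ⟨r, hr⟩
    · exact absurd ht hx
    have h1 : φ (x + y) ≤ ((s + r : ℝ) : EReal) := by
      have := rec_pair' hr y; rw [hs, ← EReal.coe_add] at this; exact this
    rcases proper_cases hp (x + y) with ht1 | ⟨r1, hr1⟩
    · rw [ht1] at h1; exact absurd (top_le_iff.1 h1) (EReal.coe_ne_top _)
    have hr1le : r1 ≤ s + r := by rw [hr1] at h1; exact_mod_cast h1
    have h2 : φ (x + y + y) ≤ ((s + r1 : ℝ) : EReal) := by
      have := rec_pair' hr1 y; rw [hs, ← EReal.coe_add] at this; exact this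
    have hassoc : x + (y + y) = x + y + y := (add_assoc x y y).symm
    rw [hassoc, hr, hs, ← EReal.coe_add]
    calc φ (x + y + y) - (r : EReal) ≤ ((s + r1 : ℝ) : EReal) - (r : EReal) :=
          EReal.sub_le_sub h2 (le_refl _)
      _ = ((s + r1 - r : ℝ) : EReal) := by rw [← EReal.coe_sub]
      _ ≤ ((s + s : ℝ) : EReal) := by exact_mod_cast (by linarith : s + r1 - r ≤ s + s)

lemma inner_le_rec {φ : G → EReal} (hp : IsProperE φ) {u : G}
    (hu : conjFn φ u ≠ ⊤) (z : G) :
    ((inner ℝ z u : ℝ) : EReal) ≤ recFn φ z := by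
  rcases ereal_cases (conjFn φ u) with hb | ht | ⟨s, hs⟩
  · exact absurd hb (conj_ne_bot hp u)
  · exact absurd ht hu
  rw [← EReal.ge_of_forall_gt_iff_ge]
  intro c hc
  have hc' : c < (inner ℝ z u : ℝ) := by exact_mod_cast hc
  set ε : ℝ := (inner ℝ z u : ℝ) - c with hε
  have hε0 : 0 < ε := by simp [hε]; linarith
  -- find x with s - ε < ⟨x,u⟩ - φ x
  have hlt : ((s - ε : ℝ) : EReal) < conjFn φ u := by
    rw [hs]; exact_mod_cast (by linarith : s - ε < s)
  rw [conjFn, lt_iSup_iff] at hlt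
  obtain ⟨x, hx⟩ := hlt
  rcases proper_cases hp x with ht1 | ⟨r, hr⟩
  · rw [ht1, EReal.sub_top] at hx; exact absurd hx not_lt_bot
  rw [hr, ← EReal.coe_sub] at hx
  have hx' : s - ε < (inner ℝ x u : ℝ) - r := by exact_mod_cast hx
  have h1 : (((inner ℝ (x + z) u : ℝ) - s : ℝ) : EReal) ≤ φ (x + z) :=
    fy' hp (le_of_eq hs) (x + z)
  have h2 : φ (x + z) - (r : EReal) ≤ recFn φ z := by
    rw [← hr]
    exact rec_pair (φ := φ) (x := x) (by rw [hr]; exact EReal.coe_ne_top r) z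
  have h3 : (((inner ℝ (x + z) u : ℝ) - s - r : ℝ) : EReal) ≤ φ (x + z) - (r : EReal) := by
    rw [EReal.coe_sub ((inner ℝ (x + z) u : ℝ) - s) r]
    exact EReal.sub_le_sub h1 (le_refl _)
  have h4 : (c : EReal) ≤ (((inner ℝ (x + z) u : ℝ) - s - r : ℝ) : EReal) := by
    have hinner : (inner ℝ (x + z) u : ℝ) = (inner ℝ x u : ℝ) + (inner ℝ z u : ℝ) :=
      inner_add_left x z u
    exact_mod_cast (by rw [hinner]; linarith : c ≤ (inner ℝ (x + z) u : ℝ) - s - r)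
  exact h4.trans (h3.trans h2)

def EpiE (φ : G → EReal) : Set (G × ℝ) := {p | φ p.1 ≤ (p.2 : EReal)}

lemma epiE_closed {φ : G → EReal} (hl : LowerSemicontinuous φ) : IsClosed (EpiE φ) := by
  rw [← isOpen_compl_iff, isOpen_iff_mem_nhds]
  rintro ⟨z, a⟩ hza
  simp only [Set.mem_compl_iff, EpiE, Set.mem_setOf_eq, not_le] at hza
  obtain ⟨c, hac, hcφ⟩ := EReal.lt_iff_exists_real_btwn.1 hza
  have h1 : {w : G | (c : EReal) < φ w} ∈ nhds z := hl z (c : EReal) hcφ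
  have h2 : Set.Iio c ∈ nhds a := Iio_mem_nhds (by exact_mod_cast hac)
  rw [nhds_prod_eq]
  refine Filter.mem_of_superset (Filter.prod_mem_prod h1 h2) ?_
  rintro ⟨w, b⟩ ⟨hw, hb⟩
  simp only [Set.mem_compl_iff, EpiE, Set.mem_setOf_eq, not_le]
  exact lt_trans (by exact_mod_cast hb : (b : EReal) < (c : EReal)) hw

lemma epiE_convex {φ : G → EReal} (hc : ConvexE G φ) : Convex ℝ (EpiE φ) := by
  rintro ⟨z1, a1⟩ h1 ⟨z2, a2⟩ h2 a b ha hb hab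
  simp only [EpiE, Set.mem_setOf_eq] at h1 h2 ⊢
  have h := hc z1 z2 a b ha hb hab
  have e1 : (a : EReal) * φ z1 ≤ (a : EReal) * ((a1 : ℝ) : EReal) :=
    mul_le_mul_of_nonneg_left h1 (by exact_mod_cast ha)
  have e2 : (b : EReal) * φ z2 ≤ (b : EReal) * ((a2 : ℝ) : EReal) :=
    mul_le_mul_of_nonneg_left h2 (by exact_mod_cast hb)
  calc φ (a • (z1, a1) + b • (z2, a2)).1 = φ (a • z1 + b • z2) := rfl
    _ ≤ (a : EReal) * φ z1 + (b : EReal) * φ z2 := h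
    _ ≤ (a : EReal) * (a1 : EReal) + (b : EReal) * (a2 : EReal) := add_le_add e1 e2
    _ = ((a * a1 + b * a2 : ℝ) : EReal) := by
        rw [← EReal.coe_mul, ← EReal.coe_mul, ← EReal.coe_add]
    _ = (((a • (z1, a1) + b • (z2, a2)).2 : ℝ) : EReal) := by
        norm_num [Prod.smul_def, smul_eq_mul]

lemma sepE {φ : G → EReal} [CompleteSpace G] (hp : IsProperE φ)
    (hl : LowerSemicontinuous φ) (hc : ConvexE G φ) {x : G} {t : ℝ}
    (hx : (t : EReal) < φ x) :
    ∃ (w : G) (s c : ℝ), s ≤ 0 ∧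
      (∀ p ∈ EpiE φ, (inner ℝ p.1 w : ℝ) + p.2 * s < c) ∧
      c < (inner ℝ x w : ℝ) + t * s := by
  have hnot : (x, t) ∉ EpiE φ := by
    simp only [EpiE, Set.mem_setOf_eq, not_le]; exact hx
  obtain ⟨L, c, hLp, hLx⟩ :=
    geometric_hahn_banach_closed_point (epiE_convex hc) (epiE_closed hl) hnot
  set s : ℝ := L (0, 1) with hs_def
  set w : G := (InnerProductSpace.toDual ℝ G).symm
    (L.comp (ContinuousLinearMap.inl ℝ G ℝ)) with hw_def
  have hL : ∀ p : G × ℝ, L p = (inner ℝ p.1 w : ℝ) + p.2 * s := by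
    intro p
    have hsplit : L p = L (p.1, (0 : ℝ)) + L ((0 : G), p.2) := by
      rw [← map_add]; congr 1; simp
    have h1 : L (p.1, (0 : ℝ)) = (inner ℝ p.1 w : ℝ) := by
      have := InnerProductSpace.toDual_symm_apply
        (𝕜 := ℝ) (E := G) (y := L.comp (ContinuousLinearMap.inl ℝ G ℝ)) (x := p.1)
      rw [real_inner_comm]
      rw [← hw_def] at this
      rw [this]
      rfl
    have h2 : L ((0 : G), p.2) = p.2 * s := by
      have : ((0 : G), p.2) = p.2 • ((0 : G), (1 : ℝ)) := by simp
      rw [this, map_smul, smul_eq_mul, hs_def]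
    rw [hsplit, h1, h2]
  have hs0 : s ≤ 0 := by
    by_contra hpos
    push_neg at hpos
    obtain ⟨x₀, r₀, hr₀⟩ := exists_real_value hp
    obtain ⟨n, hn⟩ := exists_nat_gt ((c - (inner ℝ x₀ w : ℝ) - r₀ * s) / s)
    have hmem : (x₀, r₀ + (n : ℝ)) ∈ EpiE φ := by
      simp only [EpiE, Set.mem_setOf_eq, hr₀]
      exact_mod_cast (by linarith [Nat.cast_nonneg (α := ℝ) n] : r₀ ≤ r₀ + (n : ℝ))
    have := hLp _ hmem
    rw [hL] at this
    simp only at this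
    rw [div_lt_iff₀ hpos] at hn
    nlinarith
  refine ⟨w, s, c, hs0, ?_, ?_⟩
  · intro p hpmem
    have := hLp p hpmem
    rwa [hL] at this
  · have := hLx
    rwa [hL] at this

lemma conj_boundE {φ : G → EReal} (hp : IsProperE φ) {w : G} {s c : ℝ} (hs : s < 0)
    (hsep : ∀ p ∈ EpiE φ, (inner ℝ p.1 w : ℝ) + p.2 * s < c) :
    conjFn φ ((-s)⁻¹ • w) ≤ (((-s)⁻¹ * c : ℝ) : EReal) := by
  refine iSup_le fun z => ?_
  rcases proper_cases hp z with ht | ⟨r, hr⟩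
  · rw [ht, EReal.sub_top]; exact bot_le
  · rw [hr, ← EReal.coe_sub]
    have hz : (z, r) ∈ EpiE φ := by simp [EpiE, hr]
    have h := hsep (z, r) hz
    simp only at h
    have hσ : 0 < (-s)⁻¹ := inv_pos.2 (neg_pos.2 hs)
    have hinner : (inner ℝ z ((-s)⁻¹ • w) : ℝ) = (-s)⁻¹ * (inner ℝ z w : ℝ) :=
      real_inner_smul_right z w _
    have hσs : (-s)⁻¹ * s = -1 := by rw [inv_neg, neg_mul, inv_mul_cancel₀ hs.ne]
    have h2 := mul_lt_mul_of_pos_left h hσ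
    have h3 : (-s)⁻¹ * ((inner ℝ z w : ℝ) + r * s)
        = (-s)⁻¹ * (inner ℝ z w : ℝ) + r * ((-s)⁻¹ * s) := by ring
    rw [h3, hσs] at h2
    exact_mod_cast (by rw [hinner]; linarith :
      (inner ℝ z ((-s)⁻¹ • w) : ℝ) - r ≤ (-s)⁻¹ * c)

lemma exists_conj_domE {φ : G → EReal} [CompleteSpace G] (hp : IsProperE φ)
    (hl : LowerSemicontinuous φ) (hc : ConvexE G φ) :
    ∃ (u₀ : G) (s₀ : ℝ), conjFn φ u₀ ≤ ((s₀ : ℝ) : EReal) := by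
  obtain ⟨x₀, r₀, hr₀⟩ := exists_real_value hp
  have hx : ((r₀ - 1 : ℝ) : EReal) < φ x₀ := by
    rw [hr₀]; exact_mod_cast (by linarith : r₀ - 1 < r₀)
  obtain ⟨w, s, c, hs0, hsep, hpt⟩ := sepE hp hl hc hx
  rcases lt_or_eq_of_le hs0 with hs | hs
  · exact ⟨(-s)⁻¹ • w, (-s)⁻¹ * c, conj_boundE hp hs hsep⟩
  · exfalso
    have hmem : (x₀, r₀) ∈ EpiE φ := by simp [EpiE, hr₀]
    subst hs
    have h1 := hsep _ hmem
    simp only [mul_zero, add_zero] at h1 hpt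
    linarith

lemma biconjE {φ : G → EReal} [CompleteSpace G] (hp : IsProperE φ)
    (hl : LowerSemicontinuous φ) (hc : ConvexE G φ) {x : G} {t : ℝ}
    (hx : (t : EReal) < φ x) :
    ∃ u : G, (t : EReal) < ((inner ℝ x u : ℝ) : EReal) - conjFn φ u := by
  obtain ⟨w, s, c, hs0, hsep, hpt⟩ := sepE hp hl hc hx
  rcases lt_or_eq_of_le hs0 with hs | hs
  · refine ⟨(-s)⁻¹ • w, ?_⟩
    have hb := conj_boundE hp hs hsep
    have hσ : 0 < (-s)⁻¹ := inv_pos.2 (neg_pos.2 hs)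
    have hσs : (-s)⁻¹ * s = -1 := by rw [inv_neg, neg_mul, inv_mul_cancel₀ hs.ne]
    have hinner : (inner ℝ x ((-s)⁻¹ • w) : ℝ) = (-s)⁻¹ * (inner ℝ x w : ℝ) :=
      real_inner_smul_right x w _
    have hreal : t < (inner ℝ x ((-s)⁻¹ • w) : ℝ) - (-s)⁻¹ * c := by
      have h2 := mul_lt_mul_of_pos_left hpt hσ
      have h3 : (-s)⁻¹ * ((inner ℝ x w : ℝ) + t * s)
          = (-s)⁻¹ * (inner ℝ x w : ℝ) + t * ((-s)⁻¹ * s) := by ring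
      rw [h3, hσs] at h2
      rw [hinner]; linarith
    calc (t : EReal) < (((inner ℝ x ((-s)⁻¹ • w) : ℝ) - (-s)⁻¹ * c : ℝ) : EReal) := by
          exact_mod_cast hreal
      _ = ((inner ℝ x ((-s)⁻¹ • w) : ℝ) : EReal) - (((-s)⁻¹ * c : ℝ) : EReal) :=
          EReal.coe_sub _ _
      _ ≤ ((inner ℝ x ((-s)⁻¹ • w) : ℝ) : EReal) - conjFn φ ((-s)⁻¹ • w) :=
          EReal.sub_le_sub (le_refl _) hb
  · -- s = 0
    subst hs
    obtain ⟨u₀, s₀, hu₀⟩ := exists_conj_domE hp hl hc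
    simp only [mul_zero, add_zero] at hsep hpt
    set δ : ℝ := (inner ℝ x w : ℝ) - c with hδ_def
    have hδ : 0 < δ := by simp only [hδ_def]; linarith
    obtain ⟨n, hn⟩ := exists_nat_gt ((t - (inner ℝ x u₀ : ℝ) + s₀) / δ)
    refine ⟨u₀ + (n : ℝ) • w, ?_⟩
    have hcb : conjFn φ (u₀ + (n : ℝ) • w) ≤ ((s₀ + n * c : ℝ) : EReal) := by
      refine iSup_le fun z => ?_
      rcases proper_cases hp z with htz | ⟨r, hrz⟩
      · rw [htz, EReal.sub_top]; exact bot_le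
      · rw [hrz, ← EReal.coe_sub]
        have h1 : (inner ℝ z u₀ : ℝ) - r ≤ s₀ := by
          have := (fy φ z u₀).trans hu₀
          rw [hrz, ← EReal.coe_sub] at this
          exact_mod_cast this
        have h2 : (inner ℝ z w : ℝ) < c := by
          have := hsep (z, r) (by simp [EpiE, hrz])
          simpa using this
        have hinner : (inner ℝ z (u₀ + (n : ℝ) • w) : ℝ)
            = (inner ℝ z u₀ : ℝ) + (n : ℝ) * (inner ℝ z w : ℝ) := by
          rw [inner_add_right, real_inner_smul_right]
        have hn0 : (0 : ℝ) ≤ (n : ℝ) := Nat.cast_nonneg n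
        exact_mod_cast (by rw [hinner]; nlinarith :
          (inner ℝ z (u₀ + (n : ℝ) • w) : ℝ) - r ≤ s₀ + n * c)
    have hreal : t < (inner ℝ x (u₀ + (n : ℝ) • w) : ℝ) - (s₀ + n * c) := by
      have hinner : (inner ℝ x (u₀ + (n : ℝ) • w) : ℝ)
          = (inner ℝ x u₀ : ℝ) + (n : ℝ) * (inner ℝ x w : ℝ) := by
        rw [inner_add_right, real_inner_smul_right]
      rw [div_lt_iff₀ hδ] at hn
      rw [hinner]
      simp only [hδ_def] at hn
      nlinarith
    calc (t : EReal) < (((inner ℝ x (u₀ + (n : ℝ) • w) : ℝ) - (s₀ + n * c) : ℝ) : EReal) := by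
          exact_mod_cast hreal
      _ = ((inner ℝ x (u₀ + (n : ℝ) • w) : ℝ) : EReal) - ((s₀ + n * c : ℝ) : EReal) :=
          EReal.coe_sub _ _
      _ ≤ ((inner ℝ x (u₀ + (n : ℝ) • w) : ℝ) : EReal) - conjFn φ (u₀ + (n : ℝ) • w) :=
          EReal.sub_le_sub (le_refl _) hcb

lemma supp_le_rec {φ : G → EReal} (hp : IsProperE φ) (y : G) :
    suppFn {u : G | conjFn φ u ≠ ⊤} y ≤ recFn φ y :=
  iSup₂_le fun u hu => inner_le_rec hp hu y

lemma rec_le_supp {φ : G → EReal} [CompleteSpace G] (hp : IsProperE φ)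
    (hl : LowerSemicontinuous φ) (hc : ConvexE G φ) (y : G) :
    recFn φ y ≤ suppFn {u : G | conjFn φ u ≠ ⊤} y := by
  refine iSup_le ?_
  rintro ⟨x, hx⟩
  rcases proper_cases hp x with ht | ⟨r, hr⟩
  · exact absurd ht hx
  simp only
  rw [hr, EReal.sub_le_iff_le_add (Or.inl (EReal.coe_ne_bot r))
    (Or.inl (EReal.coe_ne_top r))]
  by_contra hcon
  push_neg at hcon
  obtain ⟨t, h1t, h2t⟩ := EReal.lt_iff_exists_real_btwn.1 hcon
  obtain ⟨u, hu⟩ := biconjE hp hl hc h2t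
  have hu_top : conjFn φ u ≠ ⊤ := by
    intro h; rw [h, EReal.sub_top] at hu; exact absurd hu not_lt_bot
  rcases ereal_cases (conjFn φ u) with hb | htc | ⟨s, hsc⟩
  · exact absurd hb (conj_ne_bot hp u)
  · exact absurd htc hu_top
  rw [hsc, ← EReal.coe_sub] at hu
  have hureal : t < (inner ℝ (x + y) u : ℝ) - s := by exact_mod_cast hu
  have hxr : (inner ℝ x u : ℝ) - r ≤ s := by
    have h := (fy φ x u).trans (le_of_eq hsc)
    rw [hr, ← EReal.coe_sub] at h
    exact_mod_cast h
  have hyu : ((inner ℝ y u : ℝ) : EReal) ≤ suppFn {u : G | conjFn φ u ≠ ⊤} y :=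
    le_iSup₂ (f := fun (u : G) (_ : conjFn φ u ≠ ⊤) => ((inner ℝ y u : ℝ) : EReal)) u hu_top
  have htr : ((t - r : ℝ) : EReal) ≤ suppFn {u : G | conjFn φ u ≠ ⊤} y := by
    refine le_trans ?_ hyu
    have : t - r ≤ (inner ℝ y u : ℝ) := by
      rw [inner_add_left] at hureal; linarith
    exact_mod_cast this
  have hlt := add_le_add_left htr ((r : ℝ) : EReal)
  have heq : ((t - r : ℝ) : EReal) + ((r : ℝ) : EReal) = ((t : ℝ) : EReal) := by
    rw [← EReal.coe_add]; norm_num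
  rw [heq] at hlt
  exact absurd (lt_of_le_of_lt hlt h1t) (lt_irrefl _)

lemma rec_eq_supp {φ : G → EReal} [CompleteSpace G] (hp : IsProperE φ)
    (hl : LowerSemicontinuous φ) (hc : ConvexE G φ) (y : G) :
    recFn φ y = suppFn {u : G | conjFn φ u ≠ ⊤} y :=
  le_antisymm (rec_le_supp hp hl hc y) (supp_le_rec hp y)

lemma persp_zero (φ : G → EReal) (z : G) : persp φ (0, z) = recFn φ z := by
  simp [persp]

lemma persp_one {φ : G → EReal} (x : G) : persp φ (1, x) = φ x := by
  simp [persp]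

lemma main_neg {φ : G → EReal} (hp : IsProperE φ) {η : ℝ} (hη : η < 0) (y : G) :
    perspSubdiff φ η y = ∅ := by
  ext m
  simp only [Set.mem_empty_iff_false, iff_false]
  intro hm
  obtain ⟨x₀, r₀, hr₀⟩ := exists_real_value hp
  have h := hm (1, x₀)
  have hpe : persp φ (η, y) = ⊤ := by simp [persp, hη.not_gt, hη.ne]
  rw [hpe, persp_one, hr₀, EReal.coe_add_top] at h
  exact EReal.coe_ne_top r₀ (top_le_iff.1 h)

lemma main_zero {φ : G → EReal} [CompleteSpace G] (hp : IsProperE φ)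
    (hl : LowerSemicontinuous φ) (hc : ConvexE G φ) (y : G) :
    perspSubdiff φ 0 y = {m : ℝ × G | (m.1 : EReal) + conjFn φ m.2 ≤ 0 ∧
      suppFn {u : G | conjFn φ u ≠ ⊤} y = ((inner ℝ y m.2 : ℝ) : EReal)} := by
  have hrs := rec_eq_supp hp hl hc y
  ext m
  obtain ⟨μ, u⟩ := m
  simp only [perspSubdiff, Set.mem_setOf_eq]
  have hpe : persp φ ((0 : ℝ), y) = recFn φ y := persp_zero φ y
  constructor
  · intro hm
    obtain ⟨x₀, r₀, hr₀⟩ := exists_real_value hp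
    have hrtop : recFn φ y ≠ ⊤ := by
      intro htop
      have h := hm (1, x₀)
      rw [hpe, htop, EReal.coe_add_top, persp_one, hr₀] at h
      exact EReal.coe_ne_top r₀ (top_le_iff.1 h)
    rcases ereal_cases (recFn φ y) with hb | ht | ⟨ρ, hρ⟩
    · exact absurd hb (rec_ne_bot hp y)
    · exact absurd ht hrtop
    have hi : (inner ℝ y u : ℝ) ≤ ρ := by
      have h := hm (0, y + y)
      dsimp only at h
      have hr2 := rec_two hp y
      rw [hρ, ← EReal.coe_add] at hr2
      rw [hpe, hρ, persp_zero φ (y + y), ← EReal.coe_add] at h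
      have h2 := EReal.coe_le_coe_iff.1 (h.trans hr2)
      have hin : (inner ℝ (y + y - y) u : ℝ) = (inner ℝ y u : ℝ) := by
        rw [add_sub_cancel_right]
      rw [hin] at h2
      linarith
    have hii : ρ ≤ (inner ℝ y u : ℝ) := by
      have h := hm (0, 0)
      dsimp only at h
      rw [hpe, hρ, persp_zero φ 0, rec_zero hp, ← EReal.coe_add, ← EReal.coe_zero] at h
      have h2 := EReal.coe_le_coe_iff.1 h
      have hin : (inner ℝ ((0 : G) - y) u : ℝ) = -(inner ℝ y u : ℝ) := by
        rw [zero_sub, inner_neg_left]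
      rw [hin] at h2
      linarith
    have hyρ : (inner ℝ y u : ℝ) = ρ := le_antisymm hi hii
    refine ⟨?_, ?_⟩
    · have hcu : conjFn φ u ≤ ((-μ : ℝ) : EReal) := by
        refine iSup_le fun x => ?_
        rcases proper_cases hp x with htx | ⟨rx, hrx⟩
        · rw [htx, EReal.sub_top]; exact bot_le
        · have h := hm (1, x)
          dsimp only at h
          rw [hpe, hρ, persp_one, hrx, ← EReal.coe_add] at h
          have hre := EReal.coe_le_coe_iff.1 h
          rw [hrx, ← EReal.coe_sub]
          have hin : (inner ℝ (x - y) u : ℝ) = (inner ℝ x u : ℝ) - (inner ℝ y u : ℝ) :=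
            inner_sub_left x y u
          rw [hin, hyρ] at hre
          exact_mod_cast (by linarith : (inner ℝ x u : ℝ) - rx ≤ -μ)
      calc (μ : EReal) + conjFn φ u ≤ (μ : EReal) + ((-μ : ℝ) : EReal) :=
            add_le_add_right hcu _
        _ = ((μ + -μ : ℝ) : EReal) := (EReal.coe_add _ _).symm
        _ = 0 := by norm_num
    · rw [← hrs, hρ, hyρ]
  · rintro ⟨h1, h2⟩
    have hcu_top : conjFn φ u ≠ ⊤ := by
      intro htop
      rw [htop, EReal.coe_add_top] at h1
      exact absurd (h1.trans_lt (by norm_num : (0 : EReal) < ⊤)) (lt_irrefl _)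
    rcases ereal_cases (conjFn φ u) with hb | ht | ⟨s, hs⟩
    · exact absurd hb (conj_ne_bot hp u)
    · exact absurd ht hcu_top
    have hμs : μ + s ≤ 0 := by
      rw [hs, ← EReal.coe_add, ← EReal.coe_zero] at h1
      exact_mod_cast h1
    have hrecy : recFn φ y = ((inner ℝ y u : ℝ) : EReal) := by rw [hrs, h2]
    intro q
    obtain ⟨lam, z⟩ := q
    simp only
    rw [hpe, hrecy]
    rcases lt_trichotomy (0 : ℝ) lam with hlam | hlam | hlam
    · have hps : persp φ (lam, z) = (lam : EReal) * φ (lam⁻¹ • z) := by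
        simp [persp, hlam]
      rw [hps]
      have hfy := fy' hp (le_of_eq hs) (lam⁻¹ • z)
      have h3 := mul_le_mul_of_nonneg_left hfy
        (by exact_mod_cast hlam.le : (0 : EReal) ≤ (lam : EReal))
      rw [← EReal.coe_mul] at h3
      refine le_trans ?_ h3
      rw [← EReal.coe_add]
      apply EReal.coe_le_coe_iff.2
      have hiz : (inner ℝ (lam⁻¹ • z) u : ℝ) = lam⁻¹ * (inner ℝ z u : ℝ) :=
        real_inner_smul_left _ _ _
      rw [inner_sub_left, hiz]
      have hexp : lam * (lam⁻¹ * (inner ℝ z u : ℝ) - s) = (inner ℝ z u : ℝ) - lam * s := by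
        field_simp
      rw [hexp]
      nlinarith [mul_le_mul_of_nonneg_left (by linarith : μ ≤ -s) hlam.le]
    · have hps : persp φ (lam, z) = recFn φ z := by
        rw [← hlam]; exact persp_zero φ z
      rw [hps]
      have h4 := inner_le_rec hp hcu_top z
      refine le_trans ?_ h4
      rw [← EReal.coe_add]
      apply EReal.coe_le_coe_iff.2
      rw [inner_sub_left, ← hlam]
      ring_nf
      try exact le_refl _
    · have hps : persp φ (lam, z) = ⊤ := by
        simp [persp, hlam.not_gt, hlam.ne]
      rw [hps]
      exact le_top

lemma persp_pos {φ : G → EReal} {t : ℝ} (ht : 0 < t) (z : G) :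
    persp φ (t, z) = (t : EReal) * φ (t⁻¹ • z) := by
  simp only [persp]
  rw [if_pos (by exact ht : 0 < (t, z).1)]

lemma main_pos {φ : G → EReal} (hp : IsProperE φ) {η : ℝ} (hη : 0 < η) (y : G) :
    perspSubdiff φ η y = {m : ℝ × G | m.2 ∈ subdiff φ (η⁻¹ • y) ∧
      (m.1 : EReal) = φ (η⁻¹ • y) - (((inner ℝ y m.2 : ℝ) / η : ℝ) : EReal)} := by
  ext m
  obtain ⟨μ, u⟩ := m
  simp only [perspSubdiff, subdiff, Set.mem_setOf_eq]
  have hpe : persp φ (η, y) = (η : EReal) * φ (η⁻¹ • y) := by simp [persp, hη]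
  rcases proper_cases hp (η⁻¹ • y) with htop | ⟨r, hr⟩
  · -- degenerate case: both sides are False
    constructor
    · intro hm
      exfalso
      obtain ⟨x₀, r₀, hr₀⟩ := exists_real_value hp
      have h := hm (1, x₀)
      dsimp only at h
      rw [hpe, htop, EReal.coe_mul_top_of_pos hη, EReal.coe_add_top, persp_one, hr₀] at h
      exact EReal.coe_ne_top r₀ (top_le_iff.1 h)
    · rintro ⟨-, h2⟩
      rw [htop, EReal.top_sub_coe] at h2
      exact (EReal.coe_ne_top μ h2).elim
  · -- main case
    have hyx : (inner ℝ y u : ℝ) = η * (inner ℝ (η⁻¹ • y) u : ℝ) := by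
      rw [real_inner_smul_left]
      field_simp
    have hps_t : ∀ t : ℝ, 0 < t →
        persp φ (t * η, t • y) = ((t * η * r : ℝ) : EReal) := by
      intro t ht
      have h0 : 0 < t * η := mul_pos ht hη
      have hsm : (t * η)⁻¹ • (t • y) = η⁻¹ • y := by
        rw [smul_smul]
        congr 1
        field_simp
      rw [persp_pos h0, hsm, hr, ← EReal.coe_mul]
    constructor
    · intro hm
      have hkey : ∀ z : G, ((inner ℝ (z - η⁻¹ • y) u : ℝ) : EReal) + φ (η⁻¹ • y) ≤ φ z := by
        intro z
        have h := hm (η, η • z)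
        dsimp only at h
        have hps : persp φ (η, η • z) = (η : EReal) * φ z := by
          rw [persp_pos hη, smul_smul, inv_mul_cancel₀ hη.ne', one_smul]
        rw [hps, hpe, hr] at h
        rcases proper_cases hp z with htz | ⟨rz, hrz⟩
        · rw [htz]; exact le_top
        · rw [hrz] at h ⊢
          rw [hr, ← EReal.coe_add]
          apply EReal.coe_le_coe_iff.2
          rw [← EReal.coe_mul, ← EReal.coe_mul, ← EReal.coe_add] at h
          have hre := EReal.coe_le_coe_iff.1 h
          have hin : (inner ℝ (η • z - y) u : ℝ)
              = η * ((inner ℝ z u : ℝ) - (inner ℝ (η⁻¹ • y) u : ℝ)) := by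
            rw [inner_sub_left, real_inner_smul_left, hyx]; ring
          rw [hin] at hre
          have hin2 : (inner ℝ (z - η⁻¹ • y) u : ℝ)
              = (inner ℝ z u : ℝ) - (inner ℝ (η⁻¹ • y) u : ℝ) := inner_sub_left _ _ _
          rw [hin2]
          nlinarith
      have hmu : μ = r - (inner ℝ y u : ℝ) / η := by
        have h2 := hm (2 * η, (2 : ℝ) • y)
        have h3 := hm ((1/2) * η, ((1/2) : ℝ) • y)
        dsimp only at h2 h3
        rw [hps_t 2 (by norm_num), hpe, hr, ← EReal.coe_mul, ← EReal.coe_add] at h2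
        rw [hps_t (1/2) (by norm_num), hpe, hr, ← EReal.coe_mul, ← EReal.coe_add] at h3
        have hre2 := EReal.coe_le_coe_iff.1 h2
        have hre3 := EReal.coe_le_coe_iff.1 h3
        have hin2 : (inner ℝ ((2 : ℝ) • y - y) u : ℝ) = (inner ℝ y u : ℝ) := by
          rw [inner_sub_left, real_inner_smul_left]; ring
        have hin3 : (inner ℝ (((1/2) : ℝ) • y - y) u : ℝ) = -(1/2) * (inner ℝ y u : ℝ) := by
          rw [inner_sub_left, real_inner_smul_left]; ring
        rw [hin2] at hre2
        rw [hin3] at hre3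
        have hη' : η ≠ 0 := hη.ne'
        field_simp
        nlinarith
      refine ⟨hkey, ?_⟩
      rw [hr, ← EReal.coe_sub]
      exact_mod_cast hmu
    · rintro ⟨hu, hμeq⟩
      rw [hr, ← EReal.coe_sub] at hμeq
      have hμ : μ = r - (inner ℝ y u : ℝ) / η := by exact_mod_cast hμeq
      intro q
      obtain ⟨lam, z⟩ := q
      dsimp only
      rw [hpe, hr]
      rcases lt_trichotomy (0 : ℝ) lam with hlam | hlam | hlam
      · have hps : persp φ (lam, z) = (lam : EReal) * φ (lam⁻¹ • z) := by
          simp [persp, hlam]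
        rw [hps]
        have hsub := hu (lam⁻¹ • z)
        rw [hr] at hsub
        rcases proper_cases hp (lam⁻¹ • z) with htz | ⟨rz, hrz⟩
        · rw [htz, EReal.mul_top_of_pos (by exact_mod_cast hlam : (0 : EReal) < (lam : EReal))]
          exact le_top
        · rw [hrz] at hsub ⊢
          rw [← EReal.coe_add] at hsub
          have hsubr := EReal.coe_le_coe_iff.1 hsub
          rw [← EReal.coe_mul, ← EReal.coe_mul, ← EReal.coe_add]
          apply EReal.coe_le_coe_iff.2
          have hiz : (inner ℝ (lam⁻¹ • z) u : ℝ) = lam⁻¹ * (inner ℝ z u : ℝ) :=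
            real_inner_smul_left _ _ _
          have hix : (inner ℝ (lam⁻¹ • z - η⁻¹ • y) u : ℝ)
              = lam⁻¹ * (inner ℝ z u : ℝ) - (inner ℝ y u : ℝ) / η := by
            rw [inner_sub_left, hiz, real_inner_smul_left]
            rw [hyx]
            field_simp
          rw [hix] at hsubr
          have h4 := mul_le_mul_of_nonneg_left hsubr hlam.le
          calc (lam - η) * μ + (inner ℝ (z - y) u : ℝ) + η * r
              = lam * (lam⁻¹ * (inner ℝ z u : ℝ) - (inner ℝ y u : ℝ) / η + r) := by
                rw [hμ, inner_sub_left]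
                field_simp
                ring
            _ ≤ lam * rz := h4
      · have hps : persp φ (lam, z) = recFn φ z := by
          simp [persp, ← hlam]
        rw [hps]
        have h5 := hu (η⁻¹ • y + z)
        rw [hr] at h5
        have hin5 : (inner ℝ (η⁻¹ • y + z - η⁻¹ • y) u : ℝ) = (inner ℝ z u : ℝ) := by
          rw [add_sub_cancel_left]
        rw [hin5, ← EReal.coe_add] at h5
        have h6 : φ (η⁻¹ • y + z) - ((r : ℝ) : EReal) ≤ recFn φ z := by
          rw [← hr]
          exact rec_pair (φ := φ) (x := η⁻¹ • y) (by rw [hr]; exact EReal.coe_ne_top r) z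
        have h7 : ((inner ℝ z u : ℝ) : EReal) ≤ φ (η⁻¹ • y + z) - ((r : ℝ) : EReal) :=
          (EReal.le_sub_iff_add_le (Or.inl (EReal.coe_ne_bot r))
            (Or.inl (EReal.coe_ne_top r))).2 (by exact_mod_cast h5)
        refine le_trans ?_ (h7.trans h6)
        rw [← EReal.coe_mul, ← EReal.coe_add]
        apply EReal.coe_le_coe_iff.2
        rw [inner_sub_left, ← hlam]
        have hμη : η * μ = η * r - (inner ℝ y u : ℝ) := by
          rw [hμ]; field_simp
        nlinarith
      · have hps : persp φ (lam, z) = ⊤ := by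
          simp [persp, hlam.not_gt, hlam.ne]
        rw [hps]
        exact le_top

end PerspHelpers

/-- the subdifferential of the perspective function. -/
theorem perspective_subdifferential
    {G : Type*} [NormedAddCommGroup G] [InnerProductSpace ℝ G] [CompleteSpace G]
    (φ : G → EReal) (hφ : Gamma0 G φ)
    (C : Set (ℝ × G)) (hC : C = {m : ℝ × G | (m.1 : EReal) + conjFn φ m.2 ≤ 0})
    (η : ℝ) (y : G) :
    (0 < η → perspSubdiff φ η y =
        {m : ℝ × G | m.2 ∈ subdiff φ (η⁻¹ • y) ∧
          (m.1 : EReal) = φ (η⁻¹ • y) - (((inner ℝ y m.2 : ℝ) / η : ℝ) : EReal)}) ∧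
    (η = 0 → y ≠ 0 → perspSubdiff φ η y =
        {m ∈ C | suppFn {u : G | conjFn φ u ≠ ⊤} y = ((inner ℝ y m.2 : ℝ) : EReal)}) ∧
    (η = 0 → y = 0 → perspSubdiff φ η y = C) ∧
    (η < 0 → perspSubdiff φ η y = ∅) := by
  obtain ⟨hp, hl, hc⟩ := hφ
  refine ⟨?_, ?_, ?_, ?_⟩
  · intro hη
    exact main_pos hp hη y
  · intro hη _
    subst hη
    subst hC
    rw [main_zero hp hl hc y]
    ext m
    simp only [Set.mem_setOf_eq, Set.mem_sep_iff]
  · intro hη hy0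
    subst hη
    subst hy0
    subst hC
    rw [main_zero hp hl hc 0]
    ext m
    simp only [Set.mem_setOf_eq]
    constructor
    · exact fun h => h.1
    · intro h
      refine ⟨h, ?_⟩
      obtain ⟨u₀, s₀, hu₀⟩ := exists_conj_domE hp hl hc
      have hne : {u : G | conjFn φ u ≠ ⊤}.Nonempty :=
        ⟨u₀, fun ht => (EReal.coe_ne_top s₀) (top_le_iff.1 (ht ▸ hu₀))⟩
      have hsz : suppFn {u : G | conjFn φ u ≠ ⊤} (0 : G) = 0 := by
        rw [suppFn]
        simp only [inner_zero_left, EReal.coe_zero]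
        exact biSup_const hne
      rw [hsz]
      simp
  · intro hη
    exact main_neg hp hη y

end
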